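/- arXiv:2309.01766 — 3 statements merged into one kernel-verified Lean document; each statement's English description precedes it below -/
import Mathlib

section
/- Let (a_n) be a sequence of positive real numbers and let ρ = limsup a_n^{1/n}. Then there exists a sequence (b_n) of positive real numbers with lim b_{n+1}/b_n = 1 such that the series ∑ a_n b_n t^{-n} converges for all t > ρ, but ∑ a_n b_n ρ^{-n} diverges. -/
open Filter Topology

/-!
Put `c n = a n / ρ ^ n`, so that `limsup c n ^ (1/n) = 1`: for every `ε > 0` we have
`log (1 / c n) ≤ ε n` infinitely often, while `c n ≤ r ^ n` eventually for every `r > 1`.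
Take `b n = exp (h n)` where `h n = inf_k (α k + n / (k + 1))` is an infimum of affine
functions. It is nondecreasing, concave and sublinear (`h n / n → 0`), so
`h (n + 1) - h n → 0`, i.e. `b (n + 1) / b n → 1`, and `b` grows subexponentially, which keeps
the series convergent for `t > ρ`. Choosing `n_j` with `log (1 / c (n_j)) ≤ n_j / (j + 1)` and
`α k = ∑_{j < k} n_j / (j + 1)` forces `h (n_j) ≥ n_j / (j + 1)`, hence `c (n_j) b (n_j) ≥ 1`
and the series diverges at `t = ρ`.
-/

noncomputable def sublinearEnvelope (α : ℕ → ℝ) (m : ℕ) : ℝ :=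
  ⨅ k : ℕ, α k + m / (k + 1)

section SublinearEnvelope

variable {α : ℕ → ℝ}

theorem sublinearEnvelope_le (hα : ∀ k, 0 ≤ α k) (k m : ℕ) :
    sublinearEnvelope α m ≤ α k + m / (k + 1) :=
  ciInf_le ⟨0, by rintro _ ⟨k, rfl⟩; exact add_nonneg (hα k) (by positivity)⟩ k

theorem le_sublinearEnvelope {c : ℝ} {m : ℕ} (h : ∀ k : ℕ, c ≤ α k + m / (k + 1)) :
    c ≤ sublinearEnvelope α m :=
  le_ciInf h

theorem sublinearEnvelope_nonneg (hα : ∀ k, 0 ≤ α k) (m : ℕ) : 0 ≤ sublinearEnvelope α m :=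
  le_sublinearEnvelope fun k => add_nonneg (hα k) (by positivity)

theorem monotone_sublinearEnvelope (hα : ∀ k, 0 ≤ α k) : Monotone (sublinearEnvelope α) :=
  monotone_nat_of_le_succ fun m => le_sublinearEnvelope fun k =>
    (sublinearEnvelope_le hα k m).trans (by gcongr; simp)

theorem div_succ_mul_sublinearEnvelope_succ_le (hα : ∀ k, 0 ≤ α k) (m : ℕ) :
    (m / (m + 1) : ℝ) * sublinearEnvelope α (m + 1) ≤ sublinearEnvelope α m := by
  refine le_sublinearEnvelope fun k => ?_
  have hm : (m / (m + 1) : ℝ) ≤ 1 := div_le_one_of_le₀ (by linarith) (by positivity)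
  calc (m / (m + 1) : ℝ) * sublinearEnvelope α (m + 1)
      ≤ (m / (m + 1) : ℝ) * (α k + ↑(m + 1) / (k + 1)) := by
        gcongr
        exact sublinearEnvelope_le hα k (m + 1)
    _ = (m / (m + 1) : ℝ) * α k + m / (k + 1) := by push_cast; field_simp
    _ ≤ α k + m / (k + 1) := by gcongr; exact mul_le_of_le_one_left (hα k) hm

theorem tendsto_sublinearEnvelope_div (hα : ∀ k, 0 ≤ α k) :
    Tendsto (fun m : ℕ => sublinearEnvelope α m / m) atTop (𝓝 0) := by
  refine tendsto_order.2 ⟨fun c hc => Eventually.of_forall fun m =>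
    hc.trans_le (div_nonneg (sublinearEnvelope_nonneg hα m) m.cast_nonneg), fun ε hε => ?_⟩
  obtain ⟨k, hk⟩ := exists_nat_one_div_lt hε
  have hlim : Tendsto (fun m : ℕ => α k / m + 1 / (k + 1)) atTop (𝓝 (0 + 1 / (k + 1))) :=
    (tendsto_const_div_atTop_nhds_zero_nat _).add_const _
  filter_upwards [hlim.eventually_lt_const (by simpa using hk), eventually_ne_atTop 0]
    with m hm hm0
  refine lt_of_le_of_lt ?_ hm
  rw [div_le_iff₀ (by positivity)]
  calc sublinearEnvelope α m ≤ α k + m / (k + 1) := sublinearEnvelope_le hα k m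
    _ = (α k / m + 1 / (k + 1)) * m := by field_simp

end SublinearEnvelope

theorem Monotone.tendsto_succ_sub_of_concave {f : ℕ → ℝ} (hmono : Monotone f)
    (hconc : ∀ m : ℕ, (m / (m + 1) : ℝ) * f (m + 1) ≤ f m)
    (hdiv : Tendsto (fun m : ℕ => f m / m) atTop (𝓝 0)) :
    Tendsto (fun m => f (m + 1) - f m) atTop (𝓝 0) := by
  have hshift : Tendsto (fun m : ℕ => f (m + 1) / ↑(m + 1)) atTop (𝓝 0) :=
    hdiv.comp (tendsto_add_atTop_nat 1)
  refine squeeze_zero (fun m => sub_nonneg.2 (hmono m.le_succ)) (fun m => ?_) hshift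
  calc f (m + 1) - f m ≤ f (m + 1) - (m / (m + 1) : ℝ) * f (m + 1) := by linarith [hconc m]
    _ = f (m + 1) / ↑(m + 1) := by push_cast; field_simp; ring

theorem exists_slowly_varying_sublinear_frequently_ge (d : ℕ → ℝ)
    (hd : ∀ ε > 0, ∃ᶠ n in atTop, d n ≤ ε * n) :
    ∃ h : ℕ → ℝ, Tendsto (fun n => h (n + 1) - h n) atTop (𝓝 0) ∧
      Tendsto (fun n : ℕ => h n / n) atTop (𝓝 0) ∧ ∃ᶠ n in atTop, d n ≤ h n := by
  have hsel : ∀ j : ℕ, ∃ n, j ≤ n ∧ d n ≤ 1 / (j + 1) * n := fun j =>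
    frequently_atTop.1 (hd _ (by positivity)) j
  choose N hjN hdN using hsel
  set α : ℕ → ℝ := fun k => ∑ j ∈ Finset.range k, 1 / (j + 1) * (N j : ℝ)
  have hα : ∀ k, 0 ≤ α k := fun k => Finset.sum_nonneg fun j _ => by positivity
  refine ⟨sublinearEnvelope α,
    (monotone_sublinearEnvelope hα).tendsto_succ_sub_of_concave
      (div_succ_mul_sublinearEnvelope_succ_le hα) (tendsto_sublinearEnvelope_div hα),
    tendsto_sublinearEnvelope_div hα, frequently_atTop.2 fun M => ⟨N M, hjN M, ?_⟩⟩
  refine (hdN M).trans (le_sublinearEnvelope fun k => ?_)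
  rcases le_or_gt k M with hk | hk
  · have : 1 / (M + 1 : ℝ) * N M ≤ N M / (k + 1) := by
      rw [one_div_mul_eq_div]; gcongr
    linarith [hα k]
  · have : 1 / (M + 1 : ℝ) * N M ≤ α k :=
      Finset.single_le_sum (f := fun j : ℕ => 1 / (j + 1 : ℝ) * N j)
        (fun j _ => by positivity) (Finset.mem_range.2 hk)
    linarith [show (0 : ℝ) ≤ N M / (k + 1) by positivity]

section RootGrowth

variable {a : ℕ → ℝ}

theorem frequently_pow_lt_of_lt_limsup_rpow (ha : ∀ n, 0 ≤ a n) {r : ℝ} (hr : 0 ≤ r)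
    (h : r < limsup (fun n : ℕ => a n ^ (n : ℝ)⁻¹) atTop) : ∃ᶠ n in atTop, r ^ n < a n := by
  have hcobdd : IsCoboundedUnder (· ≤ ·) atTop (fun n : ℕ => a n ^ (n : ℝ)⁻¹) :=
    isCoboundedUnder_le_of_le atTop (x := 0) fun n => Real.rpow_nonneg (ha n) _
  refine ((frequently_lt_of_lt_limsup hcobdd h).and_eventually (eventually_ne_atTop 0)).mono
    fun n ⟨hn, hn0⟩ => ?_
  calc r ^ n < (a n ^ (n : ℝ)⁻¹) ^ n := pow_lt_pow_left₀ hn hr hn0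
    _ = a n := Real.rpow_inv_natCast_pow (ha n) hn0

theorem eventually_le_pow_of_limsup_rpow_lt (ha : ∀ n, 0 ≤ a n) {r : ℝ}
    (hbdd : IsBoundedUnder (· ≤ ·) atTop (fun n : ℕ => a n ^ (n : ℝ)⁻¹))
    (h : limsup (fun n : ℕ => a n ^ (n : ℝ)⁻¹) atTop < r) : ∀ᶠ n in atTop, a n ≤ r ^ n := by
  filter_upwards [eventually_lt_of_limsup_lt h hbdd, eventually_ne_atTop 0] with n hn hn0
  calc a n = (a n ^ (n : ℝ)⁻¹) ^ n := (Real.rpow_inv_natCast_pow (ha n) hn0).symm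
    _ ≤ r ^ n := pow_le_pow_left₀ (Real.rpow_nonneg (ha n) _) hn.le n

theorem frequently_log_pow_div_le_of_le_limsup_rpow (ha : ∀ n, 0 < a n) {ρ : ℝ} (hρ : 0 < ρ)
    (h : ρ ≤ limsup (fun n : ℕ => a n ^ (n : ℝ)⁻¹) atTop) {ε : ℝ} (hε : 0 < ε) :
    ∃ᶠ n in atTop, Real.log (ρ ^ n / a n) ≤ ε * n := by
  have hlt : ρ * Real.exp (-ε) < limsup (fun n : ℕ => a n ^ (n : ℝ)⁻¹) atTop :=
    (mul_lt_of_lt_one_right hρ (Real.exp_lt_one_iff.2 (by linarith))).trans_le h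
  refine (frequently_pow_lt_of_lt_limsup_rpow (fun n => (ha n).le) (by positivity) hlt).mono
    fun n hn => ?_
  rw [mul_pow, ← Real.exp_nat_mul] at hn
  rw [Real.log_le_iff_le_exp (by have := ha n; positivity), div_le_iff₀ (ha n), mul_comm ε,
    ← div_le_iff₀' (Real.exp_pos _), div_eq_mul_inv, ← Real.exp_neg, ← mul_neg]
  exact hn.le

end RootGrowth

theorem eventually_mul_le_pow {x y : ℕ → ℝ} {ρ : ℝ} (hρ : 0 ≤ ρ)
    (hx : ∀ r > ρ, ∀ᶠ n in atTop, x n ≤ r ^ n) (hy0 : ∀ n, 0 ≤ y n)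
    (hy : ∀ c > 1, ∀ᶠ n in atTop, y n ≤ c ^ n) {r : ℝ} (hr : ρ < r) :
    ∀ᶠ n in atTop, x n * y n ≤ r ^ n := by
  obtain ⟨r', hρr', hr'r⟩ := exists_between hr
  have hr' : 0 < r' := hρ.trans_lt hρr'
  filter_upwards [hx r' hρr', hy (r / r') ((one_lt_div hr').2 hr'r)] with n hxn hyn
  calc x n * y n ≤ r' ^ n * (r / r') ^ n := mul_le_mul hxn hyn (hy0 n) (by positivity)
    _ = r ^ n := by rw [← mul_pow, mul_div_cancel₀ _ hr'.ne']

theorem summable_mul_zpow_neg_of_eventually_le_pow {x : ℕ → ℝ} (hx0 : ∀ n, 0 ≤ x n) {ρ t : ℝ}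
    (hρ : 0 ≤ ρ) (hx : ∀ r > ρ, ∀ᶠ n in atTop, x n ≤ r ^ n) (ht : ρ < t) :
    Summable fun n => x n * t ^ (-(n : ℤ)) := by
  have ht0 : 0 < t := hρ.trans_lt ht
  obtain ⟨r, hρr, hrt⟩ := exists_between ht
  refine (summable_geometric_of_lt_one (r := r / t) (div_nonneg (hρ.trans hρr.le) ht0.le)
    ((div_lt_one ht0).2 hrt)).of_norm_bounded_eventually_nat ?_
  filter_upwards [hx r hρr] with n hn
  rw [Real.norm_of_nonneg (by have := hx0 n; positivity), zpow_neg, zpow_natCast, div_pow,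
    div_eq_mul_inv]
  exact mul_le_mul_of_nonneg_right hn (by positivity)

theorem eventually_exp_le_pow {h : ℕ → ℝ} (hh : Tendsto (fun n : ℕ => h n / n) atTop (𝓝 0))
    {c : ℝ} (hc : 1 < c) : ∀ᶠ n in atTop, Real.exp (h n) ≤ c ^ n := by
  filter_upwards [hh.eventually_lt_const (Real.log_pos hc), eventually_gt_atTop 0] with n hn hn0
  rw [← Real.exp_log (pow_pos (zero_lt_one.trans hc) n), Real.exp_le_exp, Real.log_pow,
    mul_comm]
  exact ((div_lt_iff₀ (by exact_mod_cast hn0)).1 hn).le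

theorem stmt0 (a : ℕ → ℝ) (ha : ∀ n, 0 < a n) (ρ : ℝ) (hρ : 0 < ρ)
    (hlimsup : Filter.limsup (fun n : ℕ => (a n) ^ ((n : ℝ)⁻¹)) Filter.atTop = ρ) :
    ∃ b : ℕ → ℝ, (∀ n, 0 < b n) ∧
      Filter.Tendsto (fun n => b (n + 1) / b n) Filter.atTop (nhds 1) ∧
      (∀ t : ℝ, ρ < t → Summable (fun n => a n * b n * t ^ (-(n : ℤ)))) ∧
      ¬ Summable (fun n => a n * b n * ρ ^ (-(n : ℤ))) := by
  have ha0 : ∀ n, 0 ≤ a n := fun n => (ha n).le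
  have hbdd : IsBoundedUnder (· ≤ ·) atTop (fun n : ℕ => a n ^ (n : ℝ)⁻¹) := by
    -- otherwise the `limsup` would take its junk value `0`
    by_contra h
    rw [Real.limsup_of_not_isBoundedUnder h] at hlimsup
    exact hρ.ne hlimsup
  obtain ⟨h, hinc, hsub, hfreq⟩ := exists_slowly_varying_sublinear_frequently_ge _
    fun ε hε => frequently_log_pow_div_le_of_le_limsup_rpow ha hρ hlimsup.ge hε
  refine ⟨fun n => Real.exp (h n), fun n => Real.exp_pos _, ?_, fun t ht => ?_, fun hsum => ?_⟩
  · simpa [Function.comp_def, ← Real.exp_sub] using (Real.continuous_exp.tendsto 0).comp hinc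
  · have hgrowth : ∀ r > ρ, ∀ᶠ n in atTop, a n * Real.exp (h n) ≤ r ^ n := fun r hr =>
      eventually_mul_le_pow hρ.le
        (fun s hs => eventually_le_pow_of_limsup_rpow_lt ha0 hbdd (hlimsup ▸ hs))
        (fun n => (Real.exp_pos _).le) (fun c hc => eventually_exp_le_pow hsub hc) hr
    exact summable_mul_zpow_neg_of_eventually_le_pow
      (fun n => (mul_pos (ha n) (Real.exp_pos _)).le) hρ.le hgrowth ht
  · obtain ⟨n, hge, hlt⟩ :=
      (hfreq.and_eventually (hsum.tendsto_atTop_zero.eventually_lt_const one_pos)).exists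
    rw [Real.log_le_iff_le_exp (by have := ha n; positivity), div_le_iff₀ (ha n)] at hge
    rw [zpow_neg, zpow_natCast, ← div_eq_mul_inv, div_lt_one (by positivity)] at hlt
    linarith
end

section
/- Let M : ℓ^∞(G) → ℝ be a Banach mean on a countable group G (a linear functional with M(1)=1, inf f ≤ M(f) ≤ sup f, and M(f_γ) = M(f) where f_γ(x) = f(γx)). Let H : G → (0,∞) be such that for each γ ∈ G the function g ↦ log(H(γg)/H(g)) is bounded. Then h(γ) := exp M(g ↦ log(H(γg)/H(g))) defines a group homomorphism h : G → ℝ^{>0}. -/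
open Filter Topology

/-- A real-valued function on `G` is bounded. -/
def Bdd {G : Type*} (f : G → ℝ) : Prop := ∃ C : ℝ, ∀ x, |f x| ≤ C

theorem stmt7 {G : Type*} [Group G] [Countable G]
    (M : (G → ℝ) → ℝ)
    (hadd : ∀ f g : G → ℝ, Bdd f → Bdd g → M (f + g) = M f + M g)
    (hone : M (fun _ => 1) = 1)
    (hlow : ∀ (f : G → ℝ) (a : ℝ), Bdd f → (∀ x, a ≤ f x) → a ≤ M f)
    (hup : ∀ (f : G → ℝ) (a : ℝ), Bdd f → (∀ x, f x ≤ a) → M f ≤ a)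
    (hinv : ∀ (f : G → ℝ) (γ : G), Bdd f → M (fun x => f (γ * x)) = M f)
    (H : G → ℝ) (hH : ∀ g, 0 < H g)
    (hbdd : ∀ γ : G, Bdd (fun g => Real.log (H (γ * g) / H g)))
    (h : G → ℝ)
    (hdef : ∀ γ : G, h γ = Real.exp (M (fun g => Real.log (H (γ * g) / H g)))) :
    (∀ γ : G, 0 < h γ) ∧ ∀ a b : G, h (a * b) = h a * h b := by
  refine ⟨fun γ => by rw [hdef]; exact Real.exp_pos _, fun a b => ?_⟩
  rw [hdef, hdef, hdef, ← Real.exp_add]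
  congr 1
  have key : (fun g => Real.log (H (a * b * g) / H g)) =
      (fun g => (fun x => Real.log (H (a * x) / H x)) (b * g)) +
      (fun g => Real.log (H (b * g) / H g)) := by
    funext g
    simp only [Pi.add_apply]
    rw [Real.log_div (hH _).ne' (hH _).ne', Real.log_div (hH _).ne' (hH _).ne',
      Real.log_div (hH _).ne' (hH _).ne', mul_assoc]
    ring
  rw [key, hadd]
  · rw [hinv _ b (hbdd a)]
  · obtain ⟨C, hC⟩ := hbdd a
    exact ⟨C, fun x => hC (b * x)⟩
  · exact hbdd b
end

section
/- Let μ be a probability measure on a countable group G whose support generates G as a semigroup, and let (c_n) be positive reals with lim_n c_n/c_{n+k} = 1 for each fixed k. For g ∈ G and t > λ := limsup (μ^{*n}(e))^{1/n} define ζ_c^g(t) = ∑_n μ^{*n}(g) c_n^{-1} t^{-n} (assumed finite for t > λ). Then for each g ∈ G, 0 < inf_{λ < t ≤ 2} ζ_c^g(t)/ζ_c^e(t) ≤ sup_{λ < t ≤ 2} ζ_c^g(t)/ζ_c^e(t) < ∞. -/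
/-!
If `μ^{*k}(g h⁻¹) > 0`, then `μ^{*(n+k)}(g) ≥ μ^{*k}(g h⁻¹) μ^{*n}(h)` for every `n`, and since
`c_n / c_{n+k}` is bounded below by some `ε > 0`, shifting the series of `ζ_c^h(t)` by `k` places
gives `ζ_c^g(t) ≥ μ^{*k}(g h⁻¹) ε t^{-k} ζ_c^h(t) ≥ μ^{*k}(g h⁻¹) ε 2^{-k} ζ_c^h(t)` for `t ≤ 2`.
Taking `h = e` gives the lower bound, and `(g, h) = (e, g)` the upper bound.
-/

open Filter Topology

noncomputable def conv {G : Type*} [Group G] (μ ν : G → ℝ) : G → ℝ :=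
  fun g => ∑' s : G, μ s * ν (s⁻¹ * g)

noncomputable def convPow {G : Type*} [Group G] [DecidableEq G] (μ : G → ℝ) : ℕ → G → ℝ
  | 0 => fun g => if g = 1 then 1 else 0
  | n + 1 => conv μ (convPow μ n)

section ConvPow

variable {G : Type*} [Group G] [DecidableEq G] {μ : G → ℝ}

lemma convPow_succ_apply (μ : G → ℝ) (n : ℕ) (g : G) :
    convPow μ (n + 1) g = ∑' s, μ s * convPow μ n (s⁻¹ * g) :=
  rfl

lemma convPow_one (μ : G → ℝ) : convPow μ 1 = μ := by
  ext g
  rw [convPow_succ_apply, tsum_eq_single g fun s hs => by simp [convPow, inv_mul_eq_one, hs]]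
  simp [convPow]

lemma convPow_nonneg (hμ : ∀ g, 0 ≤ μ g) (n : ℕ) (g : G) : 0 ≤ convPow μ n g := by
  induction n generalizing g with
  | zero => unfold convPow; split_ifs <;> norm_num
  | succ n ih => exact tsum_nonneg fun s => mul_nonneg (hμ s) (ih _)

section SubProbability

variable (hμ : ∀ g, 0 ≤ μ g) (hsum : Summable μ) (hle : ∑' g, μ g ≤ 1)
include hμ hsum hle

lemma convPow_le_one (n : ℕ) (g : G) : convPow μ n g ≤ 1 := by
  induction n generalizing g with
  | zero => unfold convPow; split_ifs <;> norm_num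
  | succ n ih =>
    have hterm (s : G) : μ s * convPow μ n (s⁻¹ * g) ≤ μ s := mul_le_of_le_one_right (hμ s) (ih _)
    have hsummable : Summable fun s => μ s * convPow μ n (s⁻¹ * g) :=
      hsum.of_nonneg_of_le (fun s => mul_nonneg (hμ s) (convPow_nonneg hμ _ _)) hterm
    calc convPow μ (n + 1) g = ∑' s, μ s * convPow μ n (s⁻¹ * g) := rfl
      _ ≤ ∑' s, μ s := hsummable.tsum_le_tsum hterm hsum
      _ ≤ 1 := hle

lemma summable_mul_convPow (n : ℕ) (g : G) : Summable fun s => μ s * convPow μ n (s⁻¹ * g) :=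
  hsum.of_nonneg_of_le (fun s => mul_nonneg (hμ s) (convPow_nonneg hμ _ _))
    fun s => mul_le_of_le_one_right (hμ s) (convPow_le_one hμ hsum hle _ _)

lemma convPow_mul_convPow_le (k n : ℕ) (a b : G) :
    convPow μ k a * convPow μ n b ≤ convPow μ (k + n) (a * b) := by
  induction k generalizing a with
  | zero =>
    by_cases ha : a = 1
    · simp [convPow, ha]
    · simpa [convPow, ha] using convPow_nonneg hμ n (a * b)
  | succ k ih =>
    rw [convPow_succ_apply, ← tsum_mul_right, Nat.add_right_comm, convPow_succ_apply]
    refine ((summable_mul_convPow hμ hsum hle k a).mul_right _).tsum_le_tsum (fun s => ?_)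
      (summable_mul_convPow hμ hsum hle _ _)
    rw [mul_assoc, ← mul_assoc s⁻¹ a b]
    exact mul_le_mul_of_nonneg_left (ih _) (hμ s)

lemma convPow_length_prod_pos (l : List G) (hl : ∀ x ∈ l, 0 < μ x) :
    0 < convPow μ l.length l.prod := by
  induction l with
  | nil => simp [convPow]
  | cons x l ih =>
    have hrest := ih fun y hy => hl y (List.mem_cons_of_mem x hy)
    calc 0 < convPow μ 1 x * convPow μ l.length l.prod := by
          rw [convPow_one]; exact mul_pos (hl x List.mem_cons_self) hrest
      _ ≤ convPow μ (1 + l.length) (x * l.prod) := convPow_mul_convPow_le hμ hsum hle _ _ _ _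
      _ = convPow μ (x :: l).length (x :: l).prod := by
          rw [List.length_cons, add_comm, List.prod_cons]

lemma limsup_convPow_rpow_nonneg (g : G) :
    0 ≤ limsup (fun n : ℕ => convPow μ n g ^ ((n : ℝ)⁻¹)) atTop :=
  le_limsup_of_frequently_le
    (Frequently.of_forall fun n => Real.rpow_nonneg (convPow_nonneg hμ n g) _)
    (isBoundedUnder_of ⟨1, fun n => Real.rpow_le_one (convPow_nonneg hμ n g)
      (convPow_le_one hμ hsum hle n g) (by positivity)⟩)

end SubProbability

end ConvPow

lemma exists_pos_le_of_tendsto {u : ℕ → ℝ} {L : ℝ} (hu : ∀ n, 0 < u n) (hL : 0 < L)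
    (h : Tendsto u atTop (𝓝 L)) : ∃ ε > 0, ∀ n, ε ≤ u n := by
  obtain ⟨M, hM⟩ := (h.inv₀ hL.ne').bddAbove_range
  have hM0 : 0 < M := (inv_pos.2 (hu 0)).trans_le (hM ⟨0, rfl⟩)
  exact ⟨M⁻¹, inv_pos.2 hM0, fun n => (inv_le_comm₀ (hu n) hM0).1 (hM ⟨n, rfl⟩)⟩

section Zeta

variable {G : Type*} [Group G] [DecidableEq G] {μ : G → ℝ} {c : ℕ → ℝ} {t : ℝ}

noncomputable def zetaTerm (μ : G → ℝ) (c : ℕ → ℝ) (t : ℝ) (g : G) (n : ℕ) : ℝ :=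
  convPow μ n g / c n * t ^ (-(n : ℤ))

lemma zetaTerm_nonneg (hμ : ∀ g, 0 ≤ μ g) (hc : ∀ n, 0 ≤ c n) (ht : 0 ≤ t) (g : G) (n : ℕ) :
    0 ≤ zetaTerm μ c t g n :=
  mul_nonneg (div_nonneg (convPow_nonneg hμ _ _) (hc n)) (zpow_nonneg ht _)

lemma tsum_zetaTerm_one_pos (hμ : ∀ g, 0 ≤ μ g) (hc : ∀ n, 0 < c n) (ht : 0 ≤ t)
    (hs : Summable (zetaTerm μ c t 1)) : 0 < ∑' n, zetaTerm μ c t 1 n := by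
  have h0 : 0 < zetaTerm μ c t 1 0 := by simpa [zetaTerm, convPow] using hc 0
  exact h0.trans_le (hs.le_tsum 0 fun n _ => zetaTerm_nonneg hμ (fun n => (hc n).le) ht 1 n)

section SubProbability

variable (hμ : ∀ g, 0 ≤ μ g) (hsum : Summable μ) (hle : ∑' g, μ g ≤ 1)
include hμ hsum hle

lemma mul_zetaTerm_le_zetaTerm_add (hc : ∀ n, 0 < c n) (ht : 0 < t) {k : ℕ} {ε : ℝ} (hε : 0 ≤ ε)
    (hεc : ∀ n, ε ≤ c n / c (n + k)) (a b : G) (n : ℕ) :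
    convPow μ k a * ε * t ^ (-(k : ℤ)) * zetaTerm μ c t b n ≤ zetaTerm μ c t (a * b) (n + k) := by
  have hcc : ε / c n ≤ 1 / c (n + k) := by
    rw [div_le_div_iff₀ (hc n) (hc (n + k)), one_mul]
    exact (le_div_iff₀ (hc (n + k))).1 (hεc n)
  calc convPow μ k a * ε * t ^ (-(k : ℤ)) * zetaTerm μ c t b n
      = convPow μ k a * convPow μ n b * (ε / c n) * t ^ (-((n + k : ℕ) : ℤ)) := by
        rw [zetaTerm, Nat.cast_add, neg_add, zpow_add₀ ht.ne']
        ring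
    _ ≤ convPow μ (k + n) (a * b) * (1 / c (n + k)) * t ^ (-((n + k : ℕ) : ℤ)) := by
        refine mul_le_mul_of_nonneg_right ?_ (zpow_nonneg ht.le _)
        exact mul_le_mul (convPow_mul_convPow_le hμ hsum hle _ _ _ _) hcc
          (div_nonneg hε (hc n).le) (convPow_nonneg hμ _ _)
    _ = zetaTerm μ c t (a * b) (n + k) := by rw [zetaTerm, add_comm k n, mul_one_div]

lemma mul_tsum_zetaTerm_le (hc : ∀ n, 0 < c n) (ht : 0 < t) {k : ℕ} {ε : ℝ} (hε : 0 ≤ ε)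
    (hεc : ∀ n, ε ≤ c n / c (n + k)) (a b : G) (hsb : Summable (zetaTerm μ c t b))
    (hsab : Summable (zetaTerm μ c t (a * b))) :
    convPow μ k a * ε * t ^ (-(k : ℤ)) * ∑' n, zetaTerm μ c t b n ≤
      ∑' n, zetaTerm μ c t (a * b) n := by
  rw [← tsum_mul_left]
  exact (hsb.mul_left _).tsum_le_tsum_of_inj (· + k) (add_left_injective k)
    (fun n _ => zetaTerm_nonneg hμ (fun n => (hc n).le) ht.le _ n)
    (mul_zetaTerm_le_zetaTerm_add hμ hsum hle hc ht hε hεc a b) hsab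

lemma exists_pos_mul_tsum_zetaTerm_le (hc : ∀ n, 0 < c n)
    {k : ℕ} (hslow : Tendsto (fun n : ℕ => c n / c (n + k)) atTop (𝓝 1)) {g h : G}
    (hk : 0 < convPow μ k (g * h⁻¹)) :
    ∃ C > 0, ∀ t : ℝ, 0 < t → t ≤ 2 → Summable (zetaTerm μ c t h) →
      Summable (zetaTerm μ c t g) → C * ∑' n, zetaTerm μ c t h n ≤ ∑' n, zetaTerm μ c t g n := by
  obtain ⟨ε, hε, hεc⟩ :=
    exists_pos_le_of_tendsto (fun n => div_pos (hc n) (hc (n + k))) one_pos hslow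
  refine ⟨convPow μ k (g * h⁻¹) * ε * 2⁻¹ ^ k, by positivity, fun t ht0 ht2 hsh hsg => ?_⟩
  have h2 : (2 : ℝ)⁻¹ ^ k ≤ t ^ (-(k : ℤ)) := by
    rw [zpow_neg, zpow_natCast, ← inv_pow]
    exact pow_le_pow_left₀ (by positivity) (inv_anti₀ ht0 ht2) k
  have hzh : 0 ≤ ∑' n, zetaTerm μ c t h n :=
    tsum_nonneg (zetaTerm_nonneg hμ (fun n => (hc n).le) ht0.le h)
  calc convPow μ k (g * h⁻¹) * ε * 2⁻¹ ^ k * ∑' n, zetaTerm μ c t h n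
      ≤ convPow μ k (g * h⁻¹) * ε * t ^ (-(k : ℤ)) * ∑' n, zetaTerm μ c t h n :=
        mul_le_mul_of_nonneg_right (by gcongr) hzh
    _ ≤ ∑' n, zetaTerm μ c t (g * h⁻¹ * h) n :=
        mul_tsum_zetaTerm_le hμ hsum hle hc ht0 hε.le hεc _ _ hsh (by rwa [inv_mul_cancel_right])
    _ = ∑' n, zetaTerm μ c t g n := by rw [inv_mul_cancel_right]

end SubProbability

end Zeta

theorem stmt15_general {G : Type*} [Group G] [DecidableEq G]
    (μ : G → ℝ) (hpos : ∀ g, 0 ≤ μ g) (hprob : ∑' g : G, μ g = 1)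
    (hgen : ∀ γ : G, ∃ l : List G, l ≠ [] ∧ (∀ x ∈ l, 0 < μ x) ∧ l.prod = γ)
    (c : ℕ → ℝ) (hc : ∀ n, 0 < c n)
    (hslow : ∀ k : ℕ, Filter.Tendsto (fun n : ℕ => c n / c (n + k)) Filter.atTop (nhds 1))
    (lam : ℝ)
    (hlam : lam = Filter.limsup (fun n : ℕ => (convPow μ n 1) ^ ((n : ℝ)⁻¹)) Filter.atTop)
    (ζ : G → ℝ → ℝ)
    (hζ : ∀ (g : G) (t : ℝ), ζ g t = ∑' n : ℕ, convPow μ n g / c n * t ^ (-(n : ℤ)))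
    (hconv : ∀ (g : G) (t : ℝ), lam < t →
      Summable (fun n : ℕ => convPow μ n g / c n * t ^ (-(n : ℤ))))
    (g : G) :
    ∃ A B : ℝ, 0 < A ∧
      ∀ t : ℝ, lam < t → t ≤ 2 → A ≤ ζ g t / ζ 1 t ∧ ζ g t / ζ 1 t ≤ B := by
  have hsum : Summable μ := by
    by_contra h
    simp [tsum_eq_zero_of_not_summable h] at hprob
  have hle : ∑' g, μ g ≤ 1 := hprob.le
  have hreach (γ : G) : ∃ k, 0 < convPow μ k γ := by
    obtain ⟨l, -, hl, rfl⟩ := hgen γ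
    exact ⟨l.length, convPow_length_prod_pos hpos hsum hle l hl⟩
  obtain ⟨k₁, hk₁⟩ := hreach (g * 1⁻¹)
  obtain ⟨k₂, hk₂⟩ := hreach (1 * g⁻¹)
  obtain ⟨A, hA, hgA⟩ := exists_pos_mul_tsum_zetaTerm_le hpos hsum hle hc (hslow k₁) hk₁
  obtain ⟨C, hC, hgC⟩ := exists_pos_mul_tsum_zetaTerm_le hpos hsum hle hc (hslow k₂) hk₂
  refine ⟨A, C⁻¹, hA, fun t hlt ht2 => ?_⟩
  have ht0 : 0 < t := (hlam ▸ limsup_convPow_rpow_nonneg hpos hsum hle 1).trans_lt hlt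
  have hζ1 : 0 < ζ 1 t := hζ 1 t ▸ tsum_zetaTerm_one_pos hpos hc ht0.le (hconv 1 t hlt)
  rw [le_div_iff₀ hζ1, div_le_iff₀ hζ1, hζ, hζ]
  exact ⟨hgA t ht0 ht2 (hconv 1 t hlt) (hconv g t hlt),
    (le_inv_mul_iff₀ hC).2 (hgC t ht0 ht2 (hconv g t hlt) (hconv 1 t hlt))⟩

theorem stmt15 {G : Type*} [Group G] [Countable G] [DecidableEq G]
    (μ : G → ℝ) (hpos : ∀ g, 0 ≤ μ g) (hprob : ∑' g : G, μ g = 1)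
    (hgen : ∀ γ : G, ∃ l : List G, l ≠ [] ∧ (∀ x ∈ l, 0 < μ x) ∧ l.prod = γ)
    (c : ℕ → ℝ) (hc : ∀ n, 0 < c n)
    (hslow : ∀ k : ℕ, Filter.Tendsto (fun n : ℕ => c n / c (n + k)) Filter.atTop (nhds 1))
    (lam : ℝ)
    (hlam : lam = Filter.limsup (fun n : ℕ => (convPow μ n 1) ^ ((n : ℝ)⁻¹)) Filter.atTop)
    (ζ : G → ℝ → ℝ)
    (hζ : ∀ (g : G) (t : ℝ), ζ g t = ∑' n : ℕ, convPow μ n g / c n * t ^ (-(n : ℤ)))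
    (hconv : ∀ (g : G) (t : ℝ), lam < t →
      Summable (fun n : ℕ => convPow μ n g / c n * t ^ (-(n : ℤ))))
    (g : G) :
    ∃ A B : ℝ, 0 < A ∧
      ∀ t : ℝ, lam < t → t ≤ 2 → A ≤ ζ g t / ζ 1 t ∧ ζ g t / ζ 1 t ≤ B :=
  stmt15_general μ hpos hprob hgen c hc hslow lam hlam ζ hζ hconv g
end
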